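/- arXiv:2412.20222 — 4 statements merged into one kernel-verified Lean document; each statement's English description precedes it below -/
import Mathlib

section
/- Let φ = (1+√5)/2 be the golden ratio. The tent map T_φ has a periodic point of least period 3, and for every h ∈ (1, φ), the tent map T_h has no periodic point of least period 3. -/
/-- The tent map with parameter `h`. -/
noncomputable def tentMap (h : ℝ) (x : ℝ) : ℝ :=
  if x ≤ 1 / 2 then h * x else h * (1 - x)

/-- `x ∈ [0,1]` is a periodic point of least period `n` of the tent map `T_h`. -/
def IsLeastPeriodPt (h : ℝ) (n : ℕ) (x : ℝ) : Prop :=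
  x ∈ Set.Icc (0 : ℝ) 1 ∧ (tentMap h)^[n] x = x ∧
    ∀ m : ℕ, 1 ≤ m → m < n → (tentMap h)^[m] x ≠ x

/-!
At `h = φ` the critical point is periodic: `1/2 ↦ φ/2 ↦ (φ - 1)/2 ↦ 1/2`, since `φ² = φ + 1`.

Conversely, a 3-cycle `a ↦ b ↦ c ↦ a` of `T_h` is pinned down by its itinerary (which of
`a, b, c` lie in `[0, 1/2]`), as `T_h` is affine on each half. If all three points lie on one
branch, the difference `b - a` is multiplied by `± h³ ≠ 1` around the cycle, so `a = b` and the
cycle is a fixed point. Up to rotation the other itineraries are `LLR` and `LRR`; solving the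
linear system puts the middle point `b` at `h² / (1 + h³)`, resp. `h² / (1 + h + h²)`, and the
itinerary constraint on `b` then forces `h² ≥ h + 1`, i.e. `h ≥ φ`.
-/

open Function Real goldenRatio

theorem sq_lt_add_one_of_lt_goldenRatio {h : ℝ} (h0 : 0 ≤ h) (hφ : h < φ) : h ^ 2 < h + 1 := by
  have factor : h ^ 2 - h - 1 = (h - φ) * (h - ψ) := by
    linear_combination h * goldenRatio_add_goldenConj - goldenRatio_mul_goldenConj
  linarith [mul_neg_of_neg_of_pos (sub_neg.2 hφ) (sub_pos.2 (goldenConj_neg.trans_le h0))]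

variable {h x a b c : ℝ}

theorem tentMap_of_le (hx : x ≤ 1 / 2) : tentMap h x = h * x := if_pos hx

theorem tentMap_of_gt (hx : 1 / 2 < x) : tentMap h x = h * (1 - x) := if_neg hx.not_ge

theorem tentMap_goldenRatio_half : tentMap φ (1 / 2) = φ / 2 := by
  rw [tentMap_of_le le_rfl]; ring

theorem tentMap_goldenRatio_div_two : tentMap φ (φ / 2) = (φ - 1) / 2 := by
  rw [tentMap_of_gt (by linarith [one_lt_goldenRatio])]
  linear_combination -goldenRatio_sq / 2

theorem tentMap_goldenRatio_sub_one_div_two : tentMap φ ((φ - 1) / 2) = 1 / 2 := by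
  rw [tentMap_of_le (by linarith [goldenRatio_lt_two])]
  linear_combination goldenRatio_sq / 2

theorem isLeastPeriodPt_goldenRatio_half : IsLeastPeriodPt φ 3 (1 / 2) := by
  refine ⟨⟨by norm_num, by norm_num⟩, ?_, ?_⟩
  · simp only [iterate_succ, iterate_zero, comp_apply, id_eq, tentMap_goldenRatio_half,
      tentMap_goldenRatio_div_two, tentMap_goldenRatio_sub_one_div_two]
  · intro m hm1 hm3
    interval_cases m
    · simp only [iterate_one, tentMap_goldenRatio_half]
      linarith [one_lt_goldenRatio]
    · simp only [iterate_succ, iterate_zero, comp_apply, id_eq, tentMap_goldenRatio_half,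
        tentMap_goldenRatio_div_two]
      linarith [goldenRatio_lt_two]

def IsTentThreeCycle (h a b c : ℝ) : Prop :=
  tentMap h a = b ∧ tentMap h b = c ∧ tentMap h c = a

namespace IsTentThreeCycle

theorem rotate (hcyc : IsTentThreeCycle h a b c) : IsTentThreeCycle h b c a :=
  ⟨hcyc.2.1, hcyc.2.2, hcyc.1⟩

variable (hcyc : IsTentThreeCycle h a b c) (h1 : 1 < h)
include hcyc h1

theorem eq_of_le_half (ha : a ≤ 1 / 2) (hb : b ≤ 1 / 2) (hc : c ≤ 1 / 2) : a = b := by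
  obtain ⟨hab, hbc, hca⟩ := hcyc
  rw [tentMap_of_le ha] at hab; rw [tentMap_of_le hb] at hbc; rw [tentMap_of_le hc] at hca
  have : (h ^ 3 - 1) * a = 0 := by linear_combination h ^ 2 * hab + h * hbc + hca
  have ha0 : a = 0 :=
    (mul_eq_zero.1 this).resolve_left (sub_pos.2 (one_lt_pow₀ h1 three_ne_zero)).ne'
  rw [← hab, ha0, mul_zero]

theorem eq_of_half_lt (ha : 1 / 2 < a) (hb : 1 / 2 < b) (hc : 1 / 2 < c) : a = b := by
  obtain ⟨hab, hbc, hca⟩ := hcyc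
  rw [tentMap_of_gt ha] at hab; rw [tentMap_of_gt hb] at hbc; rw [tentMap_of_gt hc] at hca
  have : (1 + h ^ 3) * (b - a) = 0 := by
    linear_combination (h ^ 2 - 1) * hab - (h + h ^ 2) * hbc + (1 + h) * hca
  linarith [(mul_eq_zero.1 this).resolve_left (by positivity)]

theorem add_one_le_sq_of_itinerary_LLR (ha : a ≤ 1 / 2) (hb : b ≤ 1 / 2) (hc : 1 / 2 < c) :
    h + 1 ≤ h ^ 2 := by
  obtain ⟨hab, hbc, hca⟩ := hcyc
  rw [tentMap_of_le ha] at hab; rw [tentMap_of_le hb] at hbc; rw [tentMap_of_gt hc] at hca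
  have hb_eq : (1 + h ^ 3) * b = h ^ 2 := by linear_combination -hab + h ^ 2 * hbc - h * hca
  have : h ^ 2 * 2 ≤ 1 + h ^ 3 := by
    nlinarith [mul_le_mul_of_nonneg_left hb (by positivity : (0 : ℝ) ≤ 1 + h ^ 3)]
  by_contra! hlt
  nlinarith [mul_pos (sub_pos.2 h1) (sub_pos.2 hlt)]

theorem add_one_lt_sq_of_itinerary_LRR (ha : a ≤ 1 / 2) (hb : 1 / 2 < b) (hc : 1 / 2 < c) :
    h + 1 < h ^ 2 := by
  obtain ⟨hab, hbc, hca⟩ := hcyc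
  rw [tentMap_of_le ha] at hab; rw [tentMap_of_gt hb] at hbc; rw [tentMap_of_gt hc] at hca
  have : (h - 1) * ((1 + h + h ^ 2) * a - h) = 0 := by
    linear_combination h ^ 2 * hab - h * hbc + hca
  have ha_eq : (1 + h + h ^ 2) * a = h :=
    sub_eq_zero.1 ((mul_eq_zero.1 this).resolve_left (sub_ne_zero.2 h1.ne'))
  have hb_eq : (1 + h + h ^ 2) * b = h ^ 2 := by
    linear_combination -(1 + h + h ^ 2) * hab + h * ha_eq
  nlinarith

theorem eq_of_sq_lt_add_one (hφ : h ^ 2 < h + 1) : a = b := by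
  rcases le_or_gt a (1 / 2) with ha | ha <;> rcases le_or_gt b (1 / 2) with hb | hb <;>
    rcases le_or_gt c (1 / 2) with hc | hc
  · exact hcyc.eq_of_le_half h1 ha hb hc
  · linarith [hcyc.add_one_le_sq_of_itinerary_LLR h1 ha hb hc]
  · linarith [hcyc.rotate.rotate.add_one_le_sq_of_itinerary_LLR h1 hc ha hb]
  · linarith [hcyc.add_one_lt_sq_of_itinerary_LRR h1 ha hb hc]
  · linarith [hcyc.rotate.add_one_le_sq_of_itinerary_LLR h1 hb hc ha]
  · linarith [hcyc.rotate.add_one_lt_sq_of_itinerary_LRR h1 hb hc ha]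
  · linarith [hcyc.rotate.rotate.add_one_lt_sq_of_itinerary_LRR h1 hc ha hb]
  · exact hcyc.eq_of_half_lt h1 ha hb hc

end IsTentThreeCycle

theorem isFixedPt_tentMap_of_isPeriodicPt_three (h1 : 1 < h) (hφ : h < φ)
    (hx : IsPeriodicPt (tentMap h) 3 x) : IsFixedPt (tentMap h) x := by
  have hcyc : IsTentThreeCycle h x (tentMap h x) (tentMap h (tentMap h x)) :=
    ⟨rfl, rfl, hx⟩
  exact (hcyc.eq_of_sq_lt_add_one h1 (sq_lt_add_one_of_lt_goldenRatio (by linarith) hφ)).symm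

theorem tent_period_three_at_golden_ratio :
    (∃ x : ℝ, IsLeastPeriodPt ((1 + Real.sqrt 5) / 2) 3 x) ∧
      ∀ h ∈ Set.Ioo (1 : ℝ) ((1 + Real.sqrt 5) / 2),
        ¬ ∃ x : ℝ, IsLeastPeriodPt h 3 x := by
  refine ⟨⟨1 / 2, isLeastPeriodPt_goldenRatio_half⟩, ?_⟩
  rintro h ⟨h1, hφ⟩ ⟨x, -, hx, hmin⟩
  exact hmin 1 le_rfl (by norm_num) (isFixedPt_tentMap_of_isPeriodicPt_three h1 hφ hx)
end

section
/- Let T be the tent map with parameter h = 3/2, let f = T² = T ∘ T, let a₁, …, a₆ be real numbers with a₁ + ⋯ + a₆ = 1, and define F : [0,1]⁶ → ℝ⁶ by F(u₁, …, u₆) = (u₂, u₃, u₄, u₅, u₆, a₁f(u₆) + a₂f(u₅) + a₃f(u₄) + a₄f(u₃) + a₅f(u₂) + a₆f(u₁)). Then the fixed points of F lying in (0,1]⁶ are exactly the three diagonal points p = (6/13, …, 6/13), q = (9/13, …, 9/13), and r = (3/5, …, 3/5). -/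
/-- The averaged delayed-feedback map on the 6-dimensional cube built from a map `f`
and averaging coefficients `a₁, …, a₆`. -/
noncomputable def avgMap (f : ℝ → ℝ) (a₁ a₂ a₃ a₄ a₅ a₆ : ℝ) :
    ℝ × ℝ × ℝ × ℝ × ℝ × ℝ → ℝ × ℝ × ℝ × ℝ × ℝ × ℝ :=
  fun ⟨u₁, u₂, u₃, u₄, u₅, u₆⟩ =>
    (u₂, u₃, u₄, u₅, u₆,
      a₁ * f u₆ + a₂ * f u₅ + a₃ * f u₄ + a₄ * f u₃ + a₅ * f u₂ + a₆ * f u₁)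

theorem avgMap_apply_eq_self_iff {f : ℝ → ℝ} {a₁ a₂ a₃ a₄ a₅ a₆ : ℝ}
    (hsum : a₁ + a₂ + a₃ + a₄ + a₅ + a₆ = 1) {u : ℝ × ℝ × ℝ × ℝ × ℝ × ℝ} :
    avgMap f a₁ a₂ a₃ a₄ a₅ a₆ u = u ↔ ∃ c, f c = c ∧ u = (c, c, c, c, c, c) := by
  obtain ⟨u₁, u₂, u₃, u₄, u₅, u₆⟩ := u
  simp only [avgMap, Prod.mk.injEq]
  constructor
  · rintro ⟨rfl, rfl, rfl, rfl, rfl, hlast⟩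
    refine ⟨u₆, ?_, rfl, rfl, rfl, rfl, rfl, rfl⟩
    linear_combination hlast - f u₆ * hsum
  · rintro ⟨c, hc, rfl, rfl, rfl, rfl, rfl, rfl⟩
    refine ⟨rfl, rfl, rfl, rfl, rfl, ?_⟩
    linear_combination (a₁ + a₂ + a₃ + a₄ + a₅ + a₆) * hc + u₆ * hsum

theorem tentMap_three_halves_sq_eq_self_iff (x : ℝ) :
    tentMap (3 / 2) (tentMap (3 / 2) x) = x ↔ x = 0 ∨ x = 6 / 13 ∨ x = 9 / 13 ∨ x = 3 / 5 := by
  constructor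
  · unfold tentMap
    split_ifs <;> intro h
    · exact .inl (by linarith)
    · exact .inr <| .inl (by linarith)
    · exact .inr <| .inr <| .inl (by linarith)
    · exact .inr <| .inr <| .inr (by linarith)
  · rintro (rfl | rfl | rfl | rfl) <;> norm_num [tentMap]

theorem avgMap_tent_sq_fixed_points
    (a₁ a₂ a₃ a₄ a₅ a₆ : ℝ) (hsum : a₁ + a₂ + a₃ + a₄ + a₅ + a₆ = 1) :
    ∀ u₁ u₂ u₃ u₄ u₅ u₆ : ℝ,
      u₁ ∈ Set.Ioc (0 : ℝ) 1 → u₂ ∈ Set.Ioc (0 : ℝ) 1 → u₃ ∈ Set.Ioc (0 : ℝ) 1 →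
      u₄ ∈ Set.Ioc (0 : ℝ) 1 → u₅ ∈ Set.Ioc (0 : ℝ) 1 → u₆ ∈ Set.Ioc (0 : ℝ) 1 →
      (avgMap (fun x => tentMap (3 / 2) (tentMap (3 / 2) x)) a₁ a₂ a₃ a₄ a₅ a₆
          (u₁, u₂, u₃, u₄, u₅, u₆) = (u₁, u₂, u₃, u₄, u₅, u₆) ↔
        ((u₁, u₂, u₃, u₄, u₅, u₆) =
            ((6 : ℝ) / 13, (6 : ℝ) / 13, (6 : ℝ) / 13, (6 : ℝ) / 13, (6 : ℝ) / 13, (6 : ℝ) / 13) ∨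
          (u₁, u₂, u₃, u₄, u₅, u₆) =
            ((9 : ℝ) / 13, (9 : ℝ) / 13, (9 : ℝ) / 13, (9 : ℝ) / 13, (9 : ℝ) / 13, (9 : ℝ) / 13) ∨
          (u₁, u₂, u₃, u₄, u₅, u₆) =
            ((3 : ℝ) / 5, (3 : ℝ) / 5, (3 : ℝ) / 5, (3 : ℝ) / 5, (3 : ℝ) / 5, (3 : ℝ) / 5))) := by
  intro u₁ u₂ u₃ u₄ u₅ u₆ hu₁ _ _ _ _ _
  rw [avgMap_apply_eq_self_iff hsum]
  constructor
  · rintro ⟨c, hc, hu⟩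
    have hc_pos : 0 < c := by
      simp only [Prod.mk.injEq] at hu
      exact hu.1 ▸ hu₁.1
    rw [hu]
    rcases (tentMap_three_halves_sq_eq_self_iff c).mp hc with rfl | rfl | rfl | rfl
    · exact absurd hc_pos (lt_irrefl 0)
    all_goals simp
  · rintro (hu | hu | hu) <;>
      exact ⟨_, (tentMap_three_halves_sq_eq_self_iff _).mpr (by norm_num), hu⟩
end

section
/- Let σ = 6/5 and set b₁ = 6(σ⁷ − σ⁵), b₂ = 5(3σ⁷ − 5σ⁵ + 2σ³), b₃ = 4(5σ⁷ − 10σ⁵ + 6σ³ − σ), b₄ = 3(5σ⁷ − 10σ⁵ + 6σ³ − σ), b₅ = 2(3σ⁷ − 5σ⁵ + 2σ³), b₆ = σ⁷ − σ⁵, and a_i = b_i / (b₁ + b₂ + b₃ + b₄ + b₅ + b₆) for i = 1, …, 6 (so that a₁ + ⋯ + a₆ = 1). Then every complex root z of the polynomial z⁶ + (9/4)(a₁z⁵ + a₂z⁴ + a₃z³ + a₄z² + a₅z + a₆) satisfies |z| < 1. (This expresses that the cycle points p = (6/13,…,6/13) and q = (9/13,…,9/13), where the slope of T²_{3/2} equals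 −9/4, are stable fixed points of the averaged stabilization scheme.) -/
/-! Multiplying the characteristic polynomial by `z - 9a₁/4` cancels its `z⁶` term and turns it into
`z⁷ = c₅z⁵ + ⋯ + c₀` with `∑ |cᵢ| < 1`; for such an equation `|z| ≥ 1` contradicts the triangle
inequality, since then `|z|ⁱ ≤ |z|⁷` for every `i < 7`. -/

open Finset

theorem norm_lt_one_of_pow_eq_sum {𝕜 : Type*} [NormedDivisionRing 𝕜] {n : ℕ} {c : Fin n → 𝕜}
    {z : 𝕜} (hc : ∑ i, ‖c i‖ < 1) (hz : z ^ n = ∑ i, c i * z ^ (i : ℕ)) : ‖z‖ < 1 := by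
  by_contra! hz1
  have hpos : 0 < ‖z‖ ^ n := pow_pos (one_pos.trans_le hz1) n
  refine lt_irrefl (‖z‖ ^ n) ?_
  calc ‖z‖ ^ n = ‖∑ i, c i * z ^ (i : ℕ)‖ := by rw [← hz, norm_pow]
    _ ≤ ∑ i, ‖c i‖ * ‖z‖ ^ (i : ℕ) := by
      simpa only [norm_mul, norm_pow] using norm_sum_le univ fun i ↦ c i * z ^ (i : ℕ)
    _ ≤ ∑ i, ‖c i‖ * ‖z‖ ^ n := by
      gcongr with i
      exact i.is_lt.le
    _ = (∑ i, ‖c i‖) * ‖z‖ ^ n := by rw [sum_mul]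
    _ < ‖z‖ ^ n := mul_lt_of_lt_one_left hpos hc

theorem stabilization_roots_inside_disk
    (σ b₁ b₂ b₃ b₄ b₅ b₆ a₁ a₂ a₃ a₄ a₅ a₆ : ℝ)
    (hσ : σ = 6 / 5)
    (hb₁ : b₁ = 6 * (σ ^ 7 - σ ^ 5))
    (hb₂ : b₂ = 5 * (3 * σ ^ 7 - 5 * σ ^ 5 + 2 * σ ^ 3))
    (hb₃ : b₃ = 4 * (5 * σ ^ 7 - 10 * σ ^ 5 + 6 * σ ^ 3 - σ))
    (hb₄ : b₄ = 3 * (5 * σ ^ 7 - 10 * σ ^ 5 + 6 * σ ^ 3 - σ))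
    (hb₅ : b₅ = 2 * (3 * σ ^ 7 - 5 * σ ^ 5 + 2 * σ ^ 3))
    (hb₆ : b₆ = σ ^ 7 - σ ^ 5)
    (ha₁ : a₁ = b₁ / (b₁ + b₂ + b₃ + b₄ + b₅ + b₆))
    (ha₂ : a₂ = b₂ / (b₁ + b₂ + b₃ + b₄ + b₅ + b₆))
    (ha₃ : a₃ = b₃ / (b₁ + b₂ + b₃ + b₄ + b₅ + b₆))
    (ha₄ : a₄ = b₄ / (b₁ + b₂ + b₃ + b₄ + b₅ + b₆))
    (ha₅ : a₅ = b₅ / (b₁ + b₂ + b₃ + b₄ + b₅ + b₆))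
    (ha₆ : a₆ = b₆ / (b₁ + b₂ + b₃ + b₄ + b₅ + b₆)) :
    ∀ z : ℂ,
      z ^ 6 + (9 / 4 : ℂ) * ((a₁ : ℂ) * z ^ 5 + (a₂ : ℂ) * z ^ 4 + (a₃ : ℂ) * z ^ 3 +
        (a₄ : ℂ) * z ^ 2 + (a₅ : ℂ) * z + (a₆ : ℂ)) = 0 →
      ‖z‖ < 1 := by
  intro z hz
  subst hσ hb₁ hb₂ hb₃ hb₄ hb₅ hb₆
  norm_num at ha₁ ha₂ ha₃ ha₄ ha₅ ha₆
  subst ha₁ ha₂ ha₃ ha₄ ha₅ ha₆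
  push_cast at hz
  refine norm_lt_one_of_pow_eq_sum (n := 7) (c := ![51018336 / 1757537929,
    42144948 / 1757537929, -(86263218 / 1757537929), -(1307879325 / 7030151716),
    -(571903695 / 1757537929), -(678661254 / 1757537929), 0]) ?_ ?_
  · norm_num [Fin.sum_univ_succ, norm_div]
  · simp [Fin.sum_univ_succ]
    linear_combination (z - 17496 / 41923) * hz
end

section
/- Let σ = 6/5 and set b₁ = 6(σ⁷ − σ⁵), b₂ = 5(3σ⁷ − 5σ⁵ + 2σ³), b₃ = 4(5σ⁷ − 10σ⁵ + 6σ³ − σ), b₄ = 3(5σ⁷ − 10σ⁵ + 6σ³ − σ), b₅ = 2(3σ⁷ − 5σ⁵ + 2σ³), b₆ = σ⁷ − σ⁵, and a_i = b_i / (b₁ + b₂ + b₃ + b₄ + b₅ + b₆) for i = 1, …, 6 (so that a₁ + ⋯ + a₆ = 1). Then the polynomial z⁶ − (9/4)(a₁z⁵ + a₂z⁴ + a₃z³ + a₄z² + a₅z + a₆) has a real root λ with λ > 1. (This expresses that the fixed point r = (3/5,…,3/5), where the slope of T²_{3/2} equals +9/4, remains unstable under the averaged stabilization scheme.) -/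
/-!
The averaged coefficients sum to one, so at `z = 1` the characteristic polynomial
`zⁿ - c · Σ wᵢ zⁱ` takes the value `1 - c < 0` whenever the slope `c` exceeds one.
Being monic, it tends to `+∞`, and the intermediate value theorem gives a root `λ > 1`.
-/

open Polynomial Filter

theorem Polynomial.exists_isRoot_gt_of_eval_neg {p : ℝ[X]} (hdeg : 0 < p.degree)
    (hlc : 0 ≤ p.leadingCoeff) {a : ℝ} (ha : p.eval a < 0) : ∃ x, a < x ∧ p.IsRoot x := by
  obtain ⟨b, hb_nonneg, hab⟩ :=
    ((p.tendsto_atTop_of_leadingCoeff_nonneg hdeg hlc).eventually_ge_atTop 0).and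
      (eventually_ge_atTop a) |>.exists
  obtain ⟨x, hx, hroot⟩ :=
    intermediate_value_Ioc hab p.continuous.continuousOn ⟨ha, hb_nonneg⟩
  exact ⟨x, hx.1, hroot⟩

/-- `w i` weighs the state delayed by `n - i` steps, so the paper's `(a₁, …, aₙ)` is `w`
reversed. -/
noncomputable def averagedCharPoly {n : ℕ} (c : ℝ) (w : Fin n → ℝ) : ℝ[X] :=
  X ^ n - C c * ∑ i : Fin n, C (w i) * X ^ (i : ℕ)

lemma Polynomial.degree_C_mul_sum_fin_lt {n : ℕ} (c : ℝ) (w : Fin n → ℝ) :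
    (C c * ∑ i : Fin n, C (w i) * X ^ (i : ℕ)).degree < n :=
  calc (C c * ∑ i : Fin n, C (w i) * X ^ (i : ℕ)).degree
      ≤ (∑ i : Fin n, C (w i) * X ^ (i : ℕ)).degree := C_mul' c _ ▸ degree_smul_le c _
    _ < n := degree_sum_fin_lt w

lemma averagedCharPoly_monic {n : ℕ} (c : ℝ) (w : Fin n → ℝ) :
    (averagedCharPoly c w).Monic :=
  monic_X_pow_sub (degree_C_mul_sum_fin_lt c w)

lemma degree_averagedCharPoly {n : ℕ} (c : ℝ) (w : Fin n → ℝ) :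
    (averagedCharPoly c w).degree = n := by
  rw [averagedCharPoly, degree_sub_eq_left_of_degree_lt] <;> rw [degree_X_pow]
  exact degree_C_mul_sum_fin_lt c w

lemma eval_one_averagedCharPoly {n : ℕ} (c : ℝ) {w : Fin n → ℝ} (hw : ∑ i, w i = 1) :
    (averagedCharPoly c w).eval 1 = 1 - c := by
  simp [averagedCharPoly, eval_finsetSum, hw]

theorem exists_isRoot_averagedCharPoly_gt_one {n : ℕ} (hn : 0 < n) {c : ℝ} (hc : 1 < c)
    {w : Fin n → ℝ} (hw : ∑ i, w i = 1) :
    ∃ x, 1 < x ∧ (averagedCharPoly c w).IsRoot x := by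
  have hmonic := averagedCharPoly_monic c w
  refine exists_isRoot_gt_of_eval_neg ?_ (by rw [hmonic.leadingCoeff]; exact zero_le_one)
    (by rw [eval_one_averagedCharPoly c hw]; linarith)
  rw [degree_averagedCharPoly]; exact_mod_cast hn

theorem stabilization_unstable_root
    (σ b₁ b₂ b₃ b₄ b₅ b₆ a₁ a₂ a₃ a₄ a₅ a₆ : ℝ)
    (hσ : σ = 6 / 5)
    (hb₁ : b₁ = 6 * (σ ^ 7 - σ ^ 5))
    (hb₂ : b₂ = 5 * (3 * σ ^ 7 - 5 * σ ^ 5 + 2 * σ ^ 3))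
    (hb₃ : b₃ = 4 * (5 * σ ^ 7 - 10 * σ ^ 5 + 6 * σ ^ 3 - σ))
    (hb₄ : b₄ = 3 * (5 * σ ^ 7 - 10 * σ ^ 5 + 6 * σ ^ 3 - σ))
    (hb₅ : b₅ = 2 * (3 * σ ^ 7 - 5 * σ ^ 5 + 2 * σ ^ 3))
    (hb₆ : b₆ = σ ^ 7 - σ ^ 5)
    (ha₁ : a₁ = b₁ / (b₁ + b₂ + b₃ + b₄ + b₅ + b₆))
    (ha₂ : a₂ = b₂ / (b₁ + b₂ + b₃ + b₄ + b₅ + b₆))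
    (ha₃ : a₃ = b₃ / (b₁ + b₂ + b₃ + b₄ + b₅ + b₆))
    (ha₄ : a₄ = b₄ / (b₁ + b₂ + b₃ + b₄ + b₅ + b₆))
    (ha₅ : a₅ = b₅ / (b₁ + b₂ + b₃ + b₄ + b₅ + b₆))
    (ha₆ : a₆ = b₆ / (b₁ + b₂ + b₃ + b₄ + b₅ + b₆)) :
    ∃ lam : ℝ, 1 < lam ∧
      lam ^ 6 - (9 / 4) * (a₁ * lam ^ 5 + a₂ * lam ^ 4 + a₃ * lam ^ 3 +
        a₄ * lam ^ 2 + a₅ * lam + a₆) = 0 := by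
  have hS : b₁ + b₂ + b₃ + b₄ + b₅ + b₆ ≠ 0 := by
    subst hσ hb₁ hb₂ hb₃ hb₄ hb₅ hb₆; norm_num
  have hw : ∑ i, ![a₆, a₅, a₄, a₃, a₂, a₁] i = 1 := by
    simp only [Fin.sum_univ_six, Matrix.cons_val]
    rw [ha₁, ha₂, ha₃, ha₄, ha₅, ha₆]
    field_simp
    ring
  obtain ⟨lam, hlam, hroot⟩ := exists_isRoot_averagedCharPoly_gt_one (by norm_num)
    (by norm_num : (1 : ℝ) < 9 / 4) hw
  refine ⟨lam, hlam, ?_⟩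
  simpa [averagedCharPoly, Fin.sum_univ_six, eval_finsetSum, add_comm, add_left_comm, add_assoc]
    using hroot
end
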